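/- Let U be an adapted integrable process in discrete time over {0,...,T} and let Z be its Snell envelope, defined by Z_T = U_T and Z_t = max(U_t, E[Z_{t+1} | F_t]). Then for every stopping time θ with values in {0,...,T}, Z_θ = ess sup over stopping times τ ≥ θ of E[U_τ | F_θ] almost surely. -/

import Mathlib

/-!
The envelope `Z` dominates `U` and is a supermartingale. For stopping times `θ ≤ τ ≤ T` and
`A ∈ ℱ_θ`, telescoping `Z_τ - Z_θ` over `{θ ≤ t < τ}` writes `∫_A Z_τ - ∫_A Z_θ` as a sum of
integrals of the one-step drifts `E[Z_{t+1} | ℱ_t] - Z_t ≤ 0`; hence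
`∫_A U_τ ≤ ∫_A Z_τ ≤ ∫_A Z_θ`, i.e. `E[U_τ | ℱ_θ] ≤ Z_θ`. If `σ` is the first time after `θ`
with `Z_σ = U_σ`, the recursion gives `Z_t = E[Z_{t+1} | ℱ_t]` on `{θ ≤ t < σ}`, so every drift
vanishes and `Z_θ = E[Z_σ | ℱ_θ] = E[U_σ | ℱ_θ]`.
-/

open MeasureTheory Filter

/-- The discrete-time Snell envelope over `{0,…,T}`, defined by backward
recursion `Z_T = U_T`, `Z_t = max (U_t) (E[Z_{t+1} | ℱ_t])`. -/
noncomputable def snellAux {Ω : Type*} {m0 : MeasurableSpace Ω} (μ : Measure Ω)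
    (ℱ : MeasureTheory.Filtration ℕ m0) (U : ℕ → Ω → ℝ) (T : ℕ) : ℕ → Ω → ℝ
  | 0 => U T
  | (k + 1) => fun ω =>
      max (U (T - (k + 1)) ω) ((μ[snellAux μ ℱ U T k | ℱ (T - (k + 1))]) ω)

noncomputable def snell {Ω : Type*} {m0 : MeasurableSpace Ω} (μ : Measure Ω)
    (ℱ : MeasureTheory.Filtration ℕ m0) (U : ℕ → Ω → ℝ) (T : ℕ) (t : ℕ) : Ω → ℝ :=
  snellAux μ ℱ U T (T - t)

section StoppedValue

variable {Ω : Type*} {m0 : MeasurableSpace Ω} {μ : Measure Ω} {ℱ : Filtration ℕ m0}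

lemma integrable_comp_stoppingTime {Z : ℕ → Ω → ℝ} (hZ : ∀ t, Integrable (Z t) μ)
    {τ : Ω → ℕ} (hτ : IsStoppingTime ℱ (fun ω => (τ ω : WithTop ℕ))) {N : ℕ}
    (hτN : ∀ ω, τ ω ≤ N) : Integrable (fun ω => Z (τ ω) ω) μ :=
  integrable_stoppedValue ℕ hτ hZ (N := N) fun ω => WithTop.coe_le_coe.mpr (hτN ω)

lemma stronglyMeasurable_comp_stoppingTime {Z : ℕ → Ω → ℝ} (hZ : Adapted ℱ Z) {θ : Ω → ℕ}
    (hθ : IsStoppingTime ℱ (fun ω => (θ ω : WithTop ℕ))) :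
    StronglyMeasurable[hθ.measurableSpace] (fun ω => Z (θ ω) ω) :=
  (measurable_stoppedValue hZ.stronglyAdapted.isStronglyProgressive_of_discrete
    hθ).stronglyMeasurable

lemma measurableSet_inter_setOf_le_and_lt {θ τ : Ω → ℕ}
    (hθ : IsStoppingTime ℱ (fun ω => (θ ω : WithTop ℕ)))
    (hτ : IsStoppingTime ℱ (fun ω => (τ ω : WithTop ℕ)))
    {A : Set Ω} (hA : MeasurableSet[hθ.measurableSpace] A) (i : ℕ) :
    MeasurableSet[ℱ i] (A ∩ {ω | θ ω ≤ i ∧ i < τ ω}) := by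
  have hAθ : MeasurableSet[ℱ i] (A ∩ {ω | θ ω ≤ i}) := by
    simpa using ((hθ.measurableSet A).mp hA).2 i
  have hτi : MeasurableSet[ℱ i] {ω | τ ω ≤ i} := by simpa using hτ i
  convert hAθ.inter hτi.compl using 1
  ext ω
  simp [and_assoc]

lemma setIntegral_comp_stoppingTime_sub_eq_sum [IsFiniteMeasure μ] {Z : ℕ → Ω → ℝ}
    (hZ : ∀ t, Integrable (Z t) μ) {θ τ : Ω → ℕ}
    (hθ : IsStoppingTime ℱ (fun ω => (θ ω : WithTop ℕ)))
    (hτ : IsStoppingTime ℱ (fun ω => (τ ω : WithTop ℕ))) (hθτ : ∀ ω, θ ω ≤ τ ω) {N : ℕ}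
    (hτN : ∀ ω, τ ω ≤ N) {A : Set Ω} (hA : MeasurableSet[hθ.measurableSpace] A) :
    ∫ ω in A, Z (τ ω) ω ∂μ - ∫ ω in A, Z (θ ω) ω ∂μ =
      ∑ i ∈ Finset.range (N + 1),
        ∫ ω in A ∩ {ω | θ ω ≤ i ∧ i < τ ω}, (μ[Z (i + 1) | ℱ i] ω - Z i ω) ∂μ := by
  set C : ℕ → Set Ω := fun i => {ω | θ ω ≤ i ∧ i < τ ω}
  have hC : ∀ i, MeasurableSet (C i) := fun i => by
    simpa [C] using ℱ.le i _ (measurableSet_inter_setOf_le_and_lt hθ hτ MeasurableSet.univ i)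
  have htelescope : ∀ ω, Z (τ ω) ω - Z (θ ω) ω =
      ∑ i ∈ Finset.range (N + 1), (C i).indicator (Z (i + 1) - Z i) ω := by
    intro ω
    have := congrFun (stoppedValue_sub_eq_sum' (u := Z) (τ := fun ω => (θ ω : ℕ∞))
      (π := fun ω => (τ ω : ℕ∞)) (fun ω => Nat.cast_le.mpr (hθτ ω))
      (fun ω => Nat.cast_le.mpr (hτN ω))) ω
    simp only [Pi.sub_apply, Finset.sum_apply, Nat.cast_le, Nat.cast_lt] at this
    exact this
  rw [← integral_sub (integrable_comp_stoppingTime hZ hτ hτN).integrableOn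
    (integrable_comp_stoppingTime hZ hθ fun ω => (hθτ ω).trans (hτN ω)).integrableOn,
    integral_congr_ae (ae_of_all _ htelescope),
    integral_finsetSum _ fun i _ => (((hZ (i + 1)).sub (hZ i)).indicator (hC i)).integrableOn]
  refine Finset.sum_congr rfl fun i _ => ?_
  rw [setIntegral_indicator (hC i), Pi.sub_def,
    integral_sub (hZ (i + 1)).integrableOn (hZ i).integrableOn,
    integral_sub integrable_condExp.integrableOn (hZ i).integrableOn,
    setIntegral_condExp (ℱ.le i) (hZ (i + 1)) (measurableSet_inter_setOf_le_and_lt hθ hτ hA i)]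

lemma MeasureTheory.Supermartingale.setIntegral_comp_stoppingTime_le [IsFiniteMeasure μ]
    {Z : ℕ → Ω → ℝ} (hZ : Supermartingale Z ℱ μ) {θ τ : Ω → ℕ}
    (hθ : IsStoppingTime ℱ (fun ω => (θ ω : WithTop ℕ)))
    (hτ : IsStoppingTime ℱ (fun ω => (τ ω : WithTop ℕ))) (hθτ : ∀ ω, θ ω ≤ τ ω) {N : ℕ}
    (hτN : ∀ ω, τ ω ≤ N) {A : Set Ω} (hA : MeasurableSet[hθ.measurableSpace] A) :
    ∫ ω in A, Z (τ ω) ω ∂μ ≤ ∫ ω in A, Z (θ ω) ω ∂μ := by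
  have hsum := setIntegral_comp_stoppingTime_sub_eq_sum hZ.integrable hθ hτ hθτ hτN hA
  have hdrift : ∀ i ∈ Finset.range (N + 1),
      ∫ ω in A ∩ {ω | θ ω ≤ i ∧ i < τ ω}, (μ[Z (i + 1) | ℱ i] ω - Z i ω) ∂μ ≤ 0 :=
    fun i _ => setIntegral_nonpos_of_ae <| by
      filter_upwards [hZ.condExp_ae_le (Nat.le_succ i)] with ω hω
      exact sub_nonpos.mpr hω
  linarith [Finset.sum_nonpos hdrift]

lemma setIntegral_comp_stoppingTime_eq_of_condExp_eq [IsFiniteMeasure μ] {Z : ℕ → Ω → ℝ}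
    (hZ : ∀ t, Integrable (Z t) μ) {θ τ : Ω → ℕ}
    (hθ : IsStoppingTime ℱ (fun ω => (θ ω : WithTop ℕ)))
    (hτ : IsStoppingTime ℱ (fun ω => (τ ω : WithTop ℕ))) (hθτ : ∀ ω, θ ω ≤ τ ω) {N : ℕ}
    (hτN : ∀ ω, τ ω ≤ N)
    (hmart : ∀ t, ∀ᵐ ω ∂μ, θ ω ≤ t → t < τ ω → μ[Z (t + 1) | ℱ t] ω = Z t ω)
    {A : Set Ω} (hA : MeasurableSet[hθ.measurableSpace] A) :
    ∫ ω in A, Z (τ ω) ω ∂μ = ∫ ω in A, Z (θ ω) ω ∂μ := by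
  have hsum := setIntegral_comp_stoppingTime_sub_eq_sum hZ hθ hτ hθτ hτN hA
  have hdrift : ∀ i ∈ Finset.range (N + 1),
      ∫ ω in A ∩ {ω | θ ω ≤ i ∧ i < τ ω}, (μ[Z (i + 1) | ℱ i] ω - Z i ω) ∂μ = 0 :=
    fun i _ => setIntegral_eq_zero_of_ae_eq_zero <| by
      filter_upwards [hmart i] with ω hω hωA
      exact sub_eq_zero.mpr (hω hωA.2.1 hωA.2.2)
  linarith [Finset.sum_eq_zero hdrift]

end StoppedValue

lemma condExp_ae_le_of_forall_setIntegral_le {Ω : Type*} {m m0 : MeasurableSpace Ω}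
    {μ : Measure Ω} (hm : m ≤ m0) [SigmaFinite (μ.trim hm)] {f g : Ω → ℝ}
    (hf : Integrable f μ) (hgm : StronglyMeasurable[m] g) (hg : Integrable g μ)
    (hfg : ∀ s, MeasurableSet[m] s → ∫ ω in s, f ω ∂μ ≤ ∫ ω in s, g ω ∂μ) :
    μ[f | m] ≤ᵐ[μ] g := by
  refine ae_le_of_ae_le_trim (hm := hm) <| ae_le_of_forall_setIntegral_le
    (integrable_condExp.trim hm stronglyMeasurable_condExp) (hg.trim hm hgm) fun s hs _ => ?_
  rw [← setIntegral_trim hm stronglyMeasurable_condExp hs, ← setIntegral_trim hm hgm hs,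
    setIntegral_condExp hm hf hs]
  exact hfg s hs

section Snell

variable {Ω : Type*} {m0 : MeasurableSpace Ω} {μ : Measure Ω} {ℱ : Filtration ℕ m0}
  {U : ℕ → Ω → ℝ} {T : ℕ}

lemma snell_of_le {t : ℕ} (ht : T ≤ t) : snell μ ℱ U T t = U T := by
  simp only [snell, Nat.sub_eq_zero_of_le ht, snellAux]

lemma snell_of_lt {t : ℕ} (ht : t < T) :
    snell μ ℱ U T t = fun ω => max (U t ω) (μ[snell μ ℱ U T (t + 1) | ℱ t] ω) := by
  obtain ⟨k, hk⟩ : ∃ k, T - t = k + 1 := ⟨T - (t + 1), by omega⟩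
  have ht' : t = T - (k + 1) := by omega
  have hk' : T - (t + 1) = k := by omega
  rw [snell, hk, snellAux, ← ht', snell, hk']

lemma le_snell {t : ℕ} (ht : t ≤ T) (ω : Ω) : U t ω ≤ snell μ ℱ U T t ω := by
  rcases ht.eq_or_lt with rfl | ht
  · rw [snell_of_le le_rfl]
  · rw [snell_of_lt ht]
    exact le_max_left _ _

lemma snell_eq_condExp_of_ne {t : ℕ} (ht : t < T) {ω : Ω} (hne : snell μ ℱ U T t ω ≠ U t ω) :
    snell μ ℱ U T t ω = μ[snell μ ℱ U T (t + 1) | ℱ t] ω := by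
  rw [snell_of_lt ht] at hne ⊢
  exact (max_choice _ _).resolve_left hne

lemma measurable_snellAux (hU : Adapted ℱ U) (k : ℕ) :
    Measurable[ℱ (T - k)] (snellAux μ ℱ U T k) := by
  induction k with
  | zero => exact hU T
  | succ k _ => exact (hU _).max stronglyMeasurable_condExp.measurable

lemma integrable_snellAux (hU : ∀ t, Integrable (U t) μ) (k : ℕ) :
    Integrable (snellAux μ ℱ U T k) μ := by
  induction k with
  | zero => exact hU T
  | succ k _ => exact (hU _).sup integrable_condExp

lemma adapted_snell (hU : Adapted ℱ U) : Adapted ℱ (snell μ ℱ U T) := fun t =>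
  (measurable_snellAux hU (T - t)).mono (ℱ.mono (by omega)) le_rfl

lemma integrable_snell (hU : ∀ t, Integrable (U t) μ) (t : ℕ) :
    Integrable (snell μ ℱ U T t) μ :=
  integrable_snellAux hU (T - t)

/-- Truncated subtraction freezes the envelope at the `ℱ_T`-measurable value `U T` after time `T`,
so it is a supermartingale on all of `ℕ`. -/
lemma supermartingale_snell [IsFiniteMeasure μ] (hadp : Adapted ℱ U)
    (hint : ∀ t, Integrable (U t) μ) : Supermartingale (snell μ ℱ U T) ℱ μ := by
  refine supermartingale_nat (adapted_snell hadp).stronglyAdapted (integrable_snell hint)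
    fun t => ?_
  rcases lt_or_ge t T with ht | ht
  · refine ae_of_all _ fun ω => ?_
    rw [snell_of_lt ht]
    exact le_max_right _ _
  · rw [snell_of_le ht, snell_of_le (ht.trans t.le_succ),
      condExp_of_stronglyMeasurable (ℱ.le t) ((hadp T).stronglyMeasurable.mono (ℱ.mono ht))
        (hint T)]

noncomputable def snellStoppingTime (μ : Measure Ω) (ℱ : Filtration ℕ m0) (U : ℕ → Ω → ℝ)
    (T : ℕ) (θ : Ω → ℕ) : Ω → ℕ :=
  fun ω => hittingBtwn (fun t => snell μ ℱ U T t - U t) {0} (θ ω) T ω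

variable {θ : Ω → ℕ}

lemma isStoppingTime_snellStoppingTime (hadp : Adapted ℱ U)
    (hθ : IsStoppingTime ℱ (fun ω => (θ ω : WithTop ℕ))) (hθT : ∀ ω, θ ω ≤ T) :
    IsStoppingTime ℱ (fun ω => (snellStoppingTime μ ℱ U T θ ω : WithTop ℕ)) :=
  Adapted.isStoppingTime_hittingBtwn_isStoppingTime hθ (fun ω => WithTop.coe_le_coe.mpr (hθT ω))
    (measurableSet_singleton 0) fun t => (adapted_snell hadp t).sub (hadp t)

lemma le_snellStoppingTime (hθT : ∀ ω, θ ω ≤ T) (ω : Ω) :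
    θ ω ≤ snellStoppingTime μ ℱ U T θ ω :=
  le_hittingBtwn (hθT ω) ω

lemma snellStoppingTime_le (ω : Ω) : snellStoppingTime μ ℱ U T θ ω ≤ T :=
  hittingBtwn_le ω

lemma snell_snellStoppingTime (hθT : ∀ ω, θ ω ≤ T) (ω : Ω) :
    snell μ ℱ U T (snellStoppingTime μ ℱ U T θ ω) ω = U (snellStoppingTime μ ℱ U T θ ω) ω := by
  have hT : snell μ ℱ U T T ω - U T ω ∈ ({0} : Set ℝ) := by simp [snell_of_le le_rfl]
  exact sub_eq_zero.mp
    (hittingBtwn_mem_set (u := fun t => snell μ ℱ U T t - U t) ⟨T, ⟨hθT ω, le_rfl⟩, hT⟩)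

lemma snell_eq_condExp_before_snellStoppingTime {ω : Ω} {t : ℕ} (hθt : θ ω ≤ t)
    (ht : t < snellStoppingTime μ ℱ U T θ ω) :
    snell μ ℱ U T t ω = μ[snell μ ℱ U T (t + 1) | ℱ t] ω :=
  snell_eq_condExp_of_ne (ht.trans_le (snellStoppingTime_le ω)) fun h =>
    notMem_of_lt_hittingBtwn ht hθt (sub_eq_zero.mpr h)

lemma condExp_comp_stoppingTime_le_snell [IsFiniteMeasure μ] (hadp : Adapted ℱ U)
    (hint : ∀ t, Integrable (U t) μ) (hθ : IsStoppingTime ℱ (fun ω => (θ ω : WithTop ℕ)))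
    (hθT : ∀ ω, θ ω ≤ T) {τ : Ω → ℕ}
    (hτ : IsStoppingTime ℱ (fun ω => (τ ω : WithTop ℕ))) (hθτ : ∀ ω, θ ω ≤ τ ω)
    (hτT : ∀ ω, τ ω ≤ T) :
    μ[fun ω => U (τ ω) ω | hθ.measurableSpace] ≤ᵐ[μ] fun ω => snell μ ℱ U T (θ ω) ω := by
  have hZ := supermartingale_snell (T := T) hadp hint
  refine condExp_ae_le_of_forall_setIntegral_le hθ.measurableSpace_le
    (integrable_comp_stoppingTime hint hτ hτT)
    (stronglyMeasurable_comp_stoppingTime (adapted_snell hadp) hθ)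
    (integrable_comp_stoppingTime hZ.integrable hθ hθT) fun A hA => ?_
  calc ∫ ω in A, U (τ ω) ω ∂μ
      ≤ ∫ ω in A, snell μ ℱ U T (τ ω) ω ∂μ :=
        setIntegral_mono (integrable_comp_stoppingTime hint hτ hτT).integrableOn
          (integrable_comp_stoppingTime hZ.integrable hτ hτT).integrableOn
          fun ω => le_snell (hτT ω) ω
    _ ≤ ∫ ω in A, snell μ ℱ U T (θ ω) ω ∂μ :=
        hZ.setIntegral_comp_stoppingTime_le hθ hτ hθτ hτT hA

lemma snell_comp_stoppingTime_ae_eq_condExp [IsFiniteMeasure μ] (hadp : Adapted ℱ U)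
    (hint : ∀ t, Integrable (U t) μ) (hθ : IsStoppingTime ℱ (fun ω => (θ ω : WithTop ℕ)))
    (hθT : ∀ ω, θ ω ≤ T) :
    (fun ω => snell μ ℱ U T (θ ω) ω) =ᵐ[μ]
      μ[fun ω => U (snellStoppingTime μ ℱ U T θ ω) ω | hθ.measurableSpace] := by
  have hσ := isStoppingTime_snellStoppingTime (μ := μ) hadp hθ hθT
  have hZint := integrable_snell (μ := μ) (ℱ := ℱ) (T := T) hint
  refine ae_eq_condExp_of_forall_setIntegral_eq hθ.measurableSpace_le
    (integrable_comp_stoppingTime hint hσ snellStoppingTime_le)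
    (fun _ _ _ => (integrable_comp_stoppingTime hZint hθ hθT).integrableOn) (fun A hA _ => ?_)
    (stronglyMeasurable_comp_stoppingTime (adapted_snell hadp) hθ).aestronglyMeasurable
  calc ∫ ω in A, snell μ ℱ U T (θ ω) ω ∂μ
      = ∫ ω in A, snell μ ℱ U T (snellStoppingTime μ ℱ U T θ ω) ω ∂μ :=
        (setIntegral_comp_stoppingTime_eq_of_condExp_eq hZint hθ hσ (le_snellStoppingTime hθT)
          snellStoppingTime_le (fun t => ae_of_all _ fun ω hθt ht =>
            (snell_eq_condExp_before_snellStoppingTime hθt ht).symm) hA).symm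
    _ = ∫ ω in A, U (snellStoppingTime μ ℱ U T θ ω) ω ∂μ :=
        setIntegral_congr_fun (hθ.measurableSpace_le _ hA) fun ω _ => snell_snellStoppingTime hθT ω

end Snell

/-- Snell envelope as an essential supremum over stopping times: for every
stopping time `θ` with values in `{0,…,T}`, `Z_θ` is the least a.s. upper bound
of the family `E[U_τ | ℱ_θ]` over stopping times `θ ≤ τ ≤ T`, and the bound is
attained by some such stopping time. -/
theorem stmt8 {Ω : Type*} {m0 : MeasurableSpace Ω} (μ : Measure Ω) [IsProbabilityMeasure μ]
    (ℱ : MeasureTheory.Filtration ℕ m0) (T : ℕ)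
    (U : ℕ → Ω → ℝ) (hadp : Adapted ℱ U) (hint : ∀ t, Integrable (U t) μ)
    (θ : Ω → ℕ) (hθ : IsStoppingTime ℱ (fun ω => (θ ω : WithTop ℕ))) (hθT : ∀ ω, θ ω ≤ T) :
    (∀ τ : Ω → ℕ, (hτ : IsStoppingTime ℱ (fun ω => (τ ω : WithTop ℕ))) → (∀ ω, θ ω ≤ τ ω) → (∀ ω, τ ω ≤ T) →
        ∀ᵐ ω ∂μ, (μ[fun ω' => U (τ ω') ω' | hθ.measurableSpace]) ω
          ≤ snell μ ℱ U T (θ ω) ω) ∧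
      ∃ τ : Ω → ℕ, ∃ hτ : IsStoppingTime ℱ (fun ω => (τ ω : WithTop ℕ)), (∀ ω, θ ω ≤ τ ω) ∧ (∀ ω, τ ω ≤ T) ∧
        (fun ω => snell μ ℱ U T (θ ω) ω)
          =ᵐ[μ] μ[fun ω' => U (τ ω') ω' | hθ.measurableSpace] :=
  ⟨fun _ hτ hθτ hτT => condExp_comp_stoppingTime_le_snell hadp hint hθ hθT hτ hθτ hτT,
    snellStoppingTime μ ℱ U T θ, isStoppingTime_snellStoppingTime hadp hθ hθT,
    le_snellStoppingTime hθT, snellStoppingTime_le,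
    snell_comp_stoppingTime_ae_eq_condExp hadp hint hθ hθT⟩
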